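/- A tower of rings A|B|C is right depth three if and only if P = (A ⊗_B A)^C is finitely generated projective as a left module over V = A^C and the map A ⊗_V P → A ⊗_B A given by a ⊗ p ↦ ap¹ ⊗_B p² is an isomorphism of A-C-bimodules. -/

import Mathlib

open scoped BigOperators

section BTCore

variable {R M N P : Type*} [AddCommGroup M] [AddCommGroup N] [AddCommGroup P]

/-- Relations defining the balanced tensor product of `M` and `N` over the
"scalars" `R`, where `R` acts on the right of `M` via `rho` and on the left of
`N` via `lam`. -/
inductive BTRel (rho : R → M →+ M) (lam : R → N →+ N) :
    FreeAbelianGroup (M × N) → FreeAbelianGroup (M × N) → Prop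
  | addl (m m' : M) (n : N) :
      BTRel rho lam (FreeAbelianGroup.of (m + m', n))
        (FreeAbelianGroup.of (m, n) + FreeAbelianGroup.of (m', n))
  | addr (m : M) (n n' : N) :
      BTRel rho lam (FreeAbelianGroup.of (m, n + n'))
        (FreeAbelianGroup.of (m, n) + FreeAbelianGroup.of (m, n'))
  | bal (r : R) (m : M) (n : N) :
      BTRel rho lam (FreeAbelianGroup.of (rho r m, n))
        (FreeAbelianGroup.of (m, lam r n))

/-- The balanced tensor product `M ⊗_R N`. -/
def BT (rho : R → M →+ M) (lam : R → N →+ N) : Type _ :=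
  (addConGen (BTRel rho lam)).Quotient

namespace BT

variable {rho : R → M →+ M} {lam : R → N →+ N}

instance : AddGroup (BT rho lam) :=
  inferInstanceAs (AddGroup (addConGen (BTRel rho lam)).Quotient)

instance : AddCommGroup (BT rho lam) :=
  { (inferInstance : AddGroup (BT rho lam)) with
    add_comm := fun a b => by
      refine AddCon.induction_on₂ a b fun x y => ?_
      change ((x + y : FreeAbelianGroup (M × N)) :
        (addConGen (BTRel rho lam)).Quotient) = ((y + x : FreeAbelianGroup (M × N)) : _)
      rw [add_comm] }

/-- The canonical generator `m ⊗ n`. -/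
def mk (rho : R → M →+ M) (lam : R → N →+ N) (m : M) (n : N) : BT rho lam :=
  ((FreeAbelianGroup.of (m, n) : FreeAbelianGroup (M × N)) :
    (addConGen (BTRel rho lam)).Quotient)

lemma mk_rel {x y : FreeAbelianGroup (M × N)} (h : BTRel rho lam x y) :
    (x : (addConGen (BTRel rho lam)).Quotient) = (y : _) :=
  (AddCon.eq _).2 (AddConGen.Rel.of _ _ h)

lemma mk_add_left (m m' : M) (n : N) :
    mk rho lam (m + m') n = mk rho lam m n + mk rho lam m' n := by
  have := mk_rel (BTRel.addl m m' n (rho := rho) (lam := lam))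
  exact this

lemma mk_add_right (m : M) (n n' : N) :
    mk rho lam m (n + n') = mk rho lam m n + mk rho lam m n' := by
  have := mk_rel (BTRel.addr m n n' (rho := rho) (lam := lam))
  exact this

lemma mk_bal (r : R) (m : M) (n : N) :
    mk rho lam (rho r m) n = mk rho lam m (lam r n) :=
  mk_rel (BTRel.bal r m n)

/-- Lift a biadditive balanced map to the balanced tensor product. -/
def lift (rho : R → M →+ M) (lam : R → N →+ N) (φ : M → N → P)
    (h1 : ∀ m m' n, φ (m + m') n = φ m n + φ m' n)
    (h2 : ∀ m n n', φ m (n + n') = φ m n + φ m n')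
    (h3 : ∀ r m n, φ (rho r m) n = φ m (lam r n)) : BT rho lam →+ P :=
  AddCon.lift _ (FreeAbelianGroup.lift fun p => φ p.1 p.2)
    (AddCon.addConGen_le.mpr (by
      rintro x y h
      cases h with
      | addl m m' n => simp [AddCon.ker_rel, FreeAbelianGroup.lift_apply_of, h1]
      | addr m n n' => simp [AddCon.ker_rel, FreeAbelianGroup.lift_apply_of, h2]
      | bal r m n => simp [AddCon.ker_rel, FreeAbelianGroup.lift_apply_of, h3]))

@[simp] lemma lift_mk (φ : M → N → P) (h1 h2 h3) (m : M) (n : N) :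
    lift rho lam φ h1 h2 h3 (mk rho lam m n) = φ m n := by
  show (addConGen (BTRel rho lam)).lift _ _ ((FreeAbelianGroup.of (m, n) :
    FreeAbelianGroup (M × N)) : (addConGen (BTRel rho lam)).Quotient) = _
  rw [AddCon.lift_coe, FreeAbelianGroup.lift_apply_of]

/-- Induction principle for the balanced tensor product. -/
protected lemma ind {motive : BT rho lam → Prop} (zero : motive 0)
    (mk' : ∀ m n, motive (mk rho lam m n)) (neg : ∀ x, motive x → motive (-x))
    (add : ∀ x y, motive x → motive y → motive (x + y)) : ∀ x : BT rho lam, motive x := by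
  intro x
  refine AddCon.induction_on x fun z => ?_
  induction z using FreeAbelianGroup.induction_on with
  | zero => exact zero
  | of p => exact mk' p.1 p.2
  | neg p h =>
      have : ((-FreeAbelianGroup.of p : FreeAbelianGroup (M × N)) :
          (addConGen (BTRel rho lam)).Quotient) = -(mk rho lam p.1 p.2) := rfl
      rw [this]; exact neg _ (mk' p.1 p.2)
  | add x y hx hy =>
      have : ((x + y : FreeAbelianGroup (M × N)) :
          (addConGen (BTRel rho lam)).Quotient) = (x : _) + (y : _) := rfl
      rw [this]; exact add _ _ hx hy

lemma hom_ext {f g : BT rho lam →+ P}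
    (h : ∀ m n, f (mk rho lam m n) = g (mk rho lam m n)) : f = g := by
  ext x
  refine BT.ind (motive := fun x => f x = g x) ?_ ?_ ?_ ?_ x
  · simp
  · exact h
  · intro y hy; simp [hy]
  · intro y z hy hz; simp [hy, hz]

end BT

end BTCore

section Tensor

variable {B A C P : Type*} [Ring B] [Ring A] [Ring C] [AddCommGroup P]

/-- The tensor product `A ⊗_B A` relative to a ring homomorphism `g : B →+* A`. -/
def Tsr (g : B →+* A) : Type _ :=
  BT (fun b => AddMonoidHom.mulRight (g b)) (fun b => AddMonoidHom.mulLeft (g b))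

instance (g : B →+* A) : AddCommGroup (Tsr g) := inferInstanceAs (AddCommGroup (BT _ _))

namespace Tsr

variable (g : B →+* A)

/-- The generator `x ⊗_B y` of `Tsr g`. -/
def tmk (x y : A) : Tsr g := BT.mk _ _ x y

lemma tmk_add_left (x x' y : A) : tmk g (x + x') y = tmk g x y + tmk g x' y :=
  BT.mk_add_left x x' y

lemma tmk_add_right (x y y' : A) : tmk g x (y + y') = tmk g x y + tmk g x y' :=
  BT.mk_add_right x y y'

lemma tmk_bal (x : A) (b : B) (y : A) : tmk g (x * g b) y = tmk g x (g b * y) :=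
  BT.mk_bal b x y

/-- Lift a biadditive `B`-balanced map `A × A → P` to `Tsr g`. -/
def tlift (φ : A → A → P)
    (h1 : ∀ x x' y, φ (x + x') y = φ x y + φ x' y)
    (h2 : ∀ x y y', φ x (y + y') = φ x y + φ x y')
    (h3 : ∀ x b y, φ (x * g b) y = φ x (g b * y)) : Tsr g →+ P :=
  BT.lift _ _ φ h1 h2 (fun r m n => h3 m r n)

@[simp] lemma tlift_mk (φ : A → A → P) (h1 h2 h3) (x y : A) :
    tlift g φ h1 h2 h3 (tmk g x y) = φ x y :=
  BT.lift_mk φ h1 h2 _ x y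

lemma thom_ext {g : B →+* A} {f f' : Tsr g →+ P}
    (h : ∀ x y, f (tmk g x y) = f' (tmk g x y)) : f = f' :=
  BT.hom_ext h

/-- Left multiplication by `a ∈ A` on the first tensorand. -/
def lmul (a : A) : Tsr g →+ Tsr g :=
  tlift g (fun x y => tmk g (a * x) y)
    (fun x x' y => by rw [mul_add, tmk_add_left])
    (fun x y y' => by rw [tmk_add_right])
    (fun x b y => by rw [← mul_assoc, tmk_bal])

@[simp] lemma lmul_mk (a x y : A) : lmul g a (tmk g x y) = tmk g (a * x) y :=
  tlift_mk g _ _ _ _ x y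

/-- Right multiplication by `a ∈ A` on the second tensorand. -/
def rmul (a : A) : Tsr g →+ Tsr g :=
  tlift g (fun x y => tmk g x (y * a))
    (fun x x' y => by rw [tmk_add_left])
    (fun x y y' => by rw [add_mul, tmk_add_right])
    (fun x b y => by rw [tmk_bal, mul_assoc])

@[simp] lemma rmul_mk (a x y : A) : rmul g a (tmk g x y) = tmk g x (y * a) :=
  tlift_mk g _ _ _ _ x y

lemma lmul_lmul (a a' : A) (p : Tsr g) : lmul g a (lmul g a' p) = lmul g (a * a') p := by
  have : ((lmul g a).comp (lmul g a')) = lmul g (a * a') :=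
    thom_ext fun x y => by simp [mul_assoc]
  exact DFunLike.congr_fun this p

lemma rmul_rmul (a a' : A) (p : Tsr g) : rmul g a (rmul g a' p) = rmul g (a' * a) p := by
  have : ((rmul g a).comp (rmul g a')) = rmul g (a' * a) :=
    thom_ext fun x y => by simp [mul_assoc]
  exact DFunLike.congr_fun this p

lemma lmul_rmul (a a' : A) (p : Tsr g) : lmul g a (rmul g a' p) = rmul g a' (lmul g a p) := by
  have : ((lmul g a).comp (rmul g a')) = (rmul g a').comp (lmul g a) :=
    thom_ext fun x y => by simp
  exact DFunLike.congr_fun this p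

lemma lmul_add_smul (a a' : A) (p : Tsr g) :
    lmul g (a + a') p = lmul g a p + lmul g a' p := by
  have : lmul g (a + a') = lmul g a + lmul g a' :=
    thom_ext fun x y => by simp [add_mul, tmk_add_left]
  rw [this]; rfl

lemma rmul_add_smul (a a' : A) (p : Tsr g) :
    rmul g (a + a') p = rmul g a p + rmul g a' p := by
  have : rmul g (a + a') = rmul g a + rmul g a' :=
    thom_ext fun x y => by simp [mul_add, tmk_add_right]
  rw [this]; rfl

/-- The multiplication map `μ : A ⊗_B A → A`. -/
def mulmap : Tsr g →+ A :=
  tlift g (fun x y => x * y) (fun x x' y => by rw [add_mul])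
    (fun x y y' => by rw [mul_add]) (fun x b y => by rw [mul_assoc])

@[simp] lemma mulmap_mk (x y : A) : mulmap g (tmk g x y) = x * y := tlift_mk g _ _ _ _ x y

end Tsr

section TowerDefs

open Tsr

variable (g : B →+* A) (hC : C →+* A)

/-- `p ∈ (A ⊗_B A)^C` : the `C`-centralizer condition, where `C` maps to `A` via `hC`. -/
def TCent (p : Tsr g) : Prop := ∀ c : C, lmul g (hC c) p = rmul g (hC c) p

/-- `α ∈ End_B A_C` : additive endomorphisms of `A` that are left `B`-linear
(via `g`) and right `C`-linear (via `hC`). -/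
def EndBAC (α : A →+ A) : Prop :=
  (∀ (b : B) (x : A), α (g b * x) = g b * α x) ∧
  ∀ (x : A) (c : C), α (x * hC c) = α x * hC c

/-- The tower is right depth three: `A ⊗_B A` is isomorphic, as `A`-`C`-bimodules,
to a direct summand of `A^n` for some `n`. Here the left `A`-action and right
`C`-action on `A^n` are componentwise, and on `Tsr g` they are `lmul` and `rmul`. -/
def IsRightD3 : Prop :=
  ∃ (n : ℕ) (π : (Fin n → A) →+ Tsr g) (σ : Tsr g →+ (Fin n → A)),
    (∀ (a : A) (v : Fin n → A), π (fun i => a * v i) = lmul g a (π v)) ∧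
    (∀ (c : C) (v : Fin n → A), π (fun i => v i * hC c) = rmul g (hC c) (π v)) ∧
    (∀ (a : A) (p : Tsr g) (i : Fin n), σ (lmul g a p) i = a * σ p i) ∧
    (∀ (c : C) (p : Tsr g) (i : Fin n), σ (rmul g (hC c) p) i = σ p i * hC c) ∧
    (∀ p : Tsr g, π (σ p) = p)

end TowerDefs

end Tensor

open Tsr
section Extra

open Tsr

variable {C B A : Type*} [Ring C] [Ring B] [Ring A] (f : C →+* B) (g : B →+* A)

/-- For `γ` left `B`-linear, the map `A ⊗_B A → A`, `p = p¹ ⊗ p² ↦ p¹ * γ p²`. -/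
def phiMap (γ : A →+ A)
    (hγ : ∀ (b : B) (x : A), γ (g b * x) = g b * γ x) : Tsr g →+ A :=
  tlift g (fun x y => x * γ y)
    (fun x x' y => by rw [add_mul])
    (fun x y y' => by rw [map_add, mul_add])
    (fun x b y => by rw [hγ, mul_assoc])

/-- The centralizer `V = A^C` of the image of `C` in `A`. -/
def Vc : Subring A := Subring.centralizer (Set.range ⇑(g.comp f))

lemma Vc_comm {v : A} (hv : v ∈ Vc f g) (c : C) :
    (g.comp f) c * v = v * (g.comp f) c :=
  Subring.mem_centralizer_iff.mp hv _ ⟨c, rfl⟩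

/-- `P = (A ⊗_B A)^C` as an additive subgroup of `A ⊗_B A`. -/
def PCsub : AddSubgroup (Tsr g) where
  carrier := {p | TCent g (g.comp f) p}
  add_mem' := fun hp hq c => by simp only [map_add, hp c, hq c]
  zero_mem' := fun c => by simp
  neg_mem' := fun hp c => by simp only [map_neg, hp c]

lemma cent_lmul {v : A} (hv : ∀ c : C, (g.comp f) c * v = v * (g.comp f) c)
    {p : Tsr g} (hp : TCent g (g.comp f) p) :
    TCent g (g.comp f) (lmul g v p) := fun c => by
  rw [lmul_lmul, hv c, ← lmul_lmul, hp c, lmul_rmul]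

lemma cent_rmul {v : A} (hv : ∀ c : C, (g.comp f) c * v = v * (g.comp f) c)
    {p : Tsr g} (hp : TCent g (g.comp f) p) :
    TCent g (g.comp f) (rmul g v p) := fun c => by
  rw [lmul_rmul, hp c, rmul_rmul, hv c, ← rmul_rmul]

/-- The left action of `v ∈ V` on `P = (A ⊗_B A)^C`. -/
def smulL (v : Vc f g) : ↥(PCsub f g) →+ ↥(PCsub f g) :=
  AddMonoidHom.mk' (fun p => ⟨lmul g (v : A) p.1, cent_lmul f g (Vc_comm f g v.2) p.2⟩)
    (fun p q => Subtype.ext (by simp))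

/-- The right action of `v ∈ V` on `P = (A ⊗_B A)^C`. -/
def smulR (v : Vc f g) : ↥(PCsub f g) →+ ↥(PCsub f g) :=
  AddMonoidHom.mk' (fun p => ⟨rmul g (v : A) p.1, cent_rmul f g (Vc_comm f g v.2) p.2⟩)
    (fun p q => Subtype.ext (by simp))

end Extra

section Kap

open Tsr

variable {C B A : Type*} [Ring C] [Ring B] [Ring A] (f : C →+* B) (g : B →+* A)

/-- The tensor product `A ⊗_V P`, where `V = A^C` and `P = (A ⊗_B A)^C`. -/
abbrev AVP (f : C →+* B) (g : B →+* A) : Type _ :=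
  BT (fun v : Vc f g => AddMonoidHom.mulRight (v : A)) (fun v : Vc f g => smulL f g v)

/-- The canonical map `A ⊗_V P → A ⊗_B A`, `a ⊗ p ↦ a p¹ ⊗ p²`. -/
def kap : AVP f g →+ Tsr g :=
  BT.lift _ _ (fun a p => lmul g a p.1)
    (fun a a' p => by rw [lmul_add_smul])
    (fun a p p' => by rw [AddSubgroup.coe_add, map_add])
    (fun v a p => by
      dsimp only [AddMonoidHom.mulRight_apply]
      rw [← lmul_lmul]
      rfl)

/-- The left `A`-action on `A ⊗_V P`. -/
def laA (a : A) : AVP f g →+ AVP f g :=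
  BT.lift _ _ (fun a' p => BT.mk _ _ (a * a') p)
    (fun a' a'' p => by rw [mul_add, BT.mk_add_left])
    (fun a' p p' => by rw [BT.mk_add_right])
    (fun v a' p => by
      rw [show a * (AddMonoidHom.mulRight (v : A)) a' = (a * a') * (v : A) by
        simp [mul_assoc]]
      exact BT.mk_bal v (a * a') p)

/-- The right `C`-action on `A ⊗_V P`, `(a ⊗ p) · c = a (gf c) ⊗ p`. -/
def rcA (c : C) : AVP f g →+ AVP f g :=
  BT.lift _ _ (fun a p => BT.mk _ _ (a * (g.comp f) c) p)
    (fun a a' p => by rw [add_mul, BT.mk_add_left])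
    (fun a p p' => by rw [BT.mk_add_right])
    (fun v a p => by
      rw [show (AddMonoidHom.mulRight (v : A)) a * (g.comp f) c
            = (a * (g.comp f) c) * (v : A) by
        simp only [AddMonoidHom.mulRight_apply, mul_assoc]
        rw [← Vc_comm f g v.2 c]]
      exact BT.mk_bal v (a * (g.comp f) c) p)

end Kap

/-! Given a splitting `π : A^n → A ⊗_B A`, `σ : A ⊗_B A → A^n` of `A`-`C`-bimodule maps, the
elements `w_i = π(e_i)` are `C`-central, i.e. lie in `P`, and `π v = Σ v_i w_i`; the coordinates
`σ(-)_i` take `P` into the centralizer `V`, so `(σ(-)_i, w_i)` is a finite dual basis of `P` over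
`V`, and `q ↦ Σ σ(q)_i ⊗ w_i` inverts `A ⊗_V P → A ⊗_B A`. Conversely, a dual basis `(θ_i, w_i)`
yields the bimodule maps `v ↦ Σ v_i w_i` and `a ⊗ p ↦ (a θ_i(p))_i`, and through the isomorphism
`A ⊗_V P ≅ A ⊗_B A` they split `A ⊗_B A` off `A^n`. -/

lemma BT.mk_sum_right {R M N ι : Type*} [AddCommGroup M] [AddCommGroup N]
    {rho : R → M →+ M} {lam : R → N →+ N} (s : Finset ι) (m : M) (x : ι → N) :
    BT.mk rho lam m (∑ i ∈ s, x i) = ∑ i ∈ s, BT.mk rho lam m (x i) :=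
  map_sum (AddMonoidHom.mk' (BT.mk rho lam m) (BT.mk_add_right m)) x s

section SumLmul

variable {C B A : Type*} [Ring C] [Ring B] [Ring A] (g : B →+* A) {n : ℕ}

def sumLmul (w : Fin n → Tsr g) : (Fin n → A) →+ Tsr g :=
  AddMonoidHom.mk' (fun v => ∑ i, lmul g (v i) (w i)) fun v v' => by
    simp only [Pi.add_apply, lmul_add_smul, Finset.sum_add_distrib]

lemma sumLmul_apply (w : Fin n → Tsr g) (v : Fin n → A) :
    sumLmul g w v = ∑ i, lmul g (v i) (w i) := rfl

lemma sumLmul_mul_left (w : Fin n → Tsr g) (a : A) (v : Fin n → A) :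
    sumLmul g w (fun i => a * v i) = lmul g a (sumLmul g w v) := by
  simp only [sumLmul_apply, map_sum, lmul_lmul]

lemma sumLmul_mul_right {hC : C →+* A} {w : Fin n → Tsr g} (hw : ∀ i, TCent g hC (w i))
    (c : C) (v : Fin n → A) :
    sumLmul g w (fun i => v i * hC c) = rmul g (hC c) (sumLmul g w v) := by
  simp only [sumLmul_apply, map_sum]
  refine Finset.sum_congr rfl fun i _ => ?_
  rw [← lmul_lmul, hw i c, lmul_rmul]

variable {g}

lemma eq_sumLmul_single {π : (Fin n → A) →+ Tsr g}
    (hπ : ∀ (a : A) (v : Fin n → A), π (fun i => a * v i) = lmul g a (π v)) :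
    π = sumLmul g (fun i => π (Pi.single i 1)) := by
  refine AddMonoidHom.ext fun v => ?_
  calc π v = π (∑ i, Pi.single i (v i)) := by rw [Finset.univ_sum_single]
    _ = ∑ i, π (fun j => v i * (Pi.single i 1 : Fin n → A) j) := by
      rw [map_sum]
      congr! 2 with i
      funext j
      simp [Pi.single_apply]
    _ = sumLmul g (fun i => π (Pi.single i 1)) v := by simp only [hπ]; rfl

lemma tCent_single {hC : C →+* A} {π : (Fin n → A) →+ Tsr g}
    (hπA : ∀ (a : A) (v : Fin n → A), π (fun i => a * v i) = lmul g a (π v))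
    (hπC : ∀ (c : C) (v : Fin n → A), π (fun i => v i * hC c) = rmul g (hC c) (π v))
    (i : Fin n) : TCent g hC (π (Pi.single i 1)) := fun c => by
  rw [← hπA, ← hπC]
  congr 1
  funext j
  simp [Pi.single_apply]

end SumLmul

section DualBasis

variable {C B A : Type*} [Ring C] [Ring B] [Ring A] (f : C →+* B) (g : B →+* A) {n : ℕ}

lemma kap_mk (a : A) (p : PCsub f g) : kap f g (BT.mk _ _ a p) = lmul g a (p : Tsr g) :=
  BT.lift_mk _ _ _ _ a p

lemma laA_mk (a a' : A) (p : PCsub f g) :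
    laA f g a (BT.mk _ _ a' p) = BT.mk _ _ (a * a') p :=
  BT.lift_mk _ _ _ _ a' p

lemma rcA_mk (c : C) (a : A) (p : PCsub f g) :
    rcA f g c (BT.mk _ _ a p) = BT.mk _ _ (a * (g.comp f) c) p :=
  BT.lift_mk _ _ _ _ a p

lemma kap_laA (a : A) (q : AVP f g) : kap f g (laA f g a q) = lmul g a (kap f g q) := by
  have h : (kap f g).comp (laA f g a) = (lmul g a).comp (kap f g) :=
    BT.hom_ext fun a' p => by simp only [AddMonoidHom.comp_apply, laA_mk, kap_mk, lmul_lmul]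
  exact DFunLike.congr_fun h q

lemma kap_rcA (c : C) (q : AVP f g) :
    kap f g (rcA f g c q) = rmul g ((g.comp f) c) (kap f g q) := by
  have h : (kap f g).comp (rcA f g c) = (rmul g ((g.comp f) c)).comp (kap f g) :=
    BT.hom_ext fun a p => by
      simp only [AddMonoidHom.comp_apply, rcA_mk, kap_mk]
      rw [← lmul_lmul, p.2 c, lmul_rmul]
  exact DFunLike.congr_fun h q

/-- A finite dual basis of `P` as a left `V`-module; by the dual basis lemma, one exists
exactly when `P` is finitely generated projective over `V`. -/
structure IsDualBasis (θ : Fin n → (PCsub f g →+ A)) (w : Fin n → PCsub f g) : Prop where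
  mem_Vc : ∀ i p, θ i p ∈ Vc f g
  map_smulL : ∀ i (v : Vc f g) p, θ i (smulL f g v p) = v * θ i p
  sum_lmul : ∀ p : PCsub f g, (p : Tsr g) = ∑ i, lmul g (θ i p) (w i)

def sumMk (w : Fin n → PCsub f g) : (Fin n → A) →+ AVP f g :=
  AddMonoidHom.mk' (fun v => ∑ i, BT.mk _ _ (v i) (w i)) fun v v' => by
    simp only [Pi.add_apply, BT.mk_add_left, Finset.sum_add_distrib]

lemma kap_sumMk (w : Fin n → PCsub f g) (v : Fin n → A) :
    kap f g (sumMk f g w v) = sumLmul g (fun i => (w i : Tsr g)) v := by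
  simp only [sumMk, AddMonoidHom.mk'_apply, map_sum, kap_mk, sumLmul_apply]

namespace IsDualBasis

variable {f g} {θ : Fin n → (PCsub f g →+ A)} {w : Fin n → PCsub f g} (h : IsDualBasis f g θ w)

lemma sum_smulL (p : PCsub f g) : ∑ i, smulL f g ⟨θ i p, h.mem_Vc i p⟩ (w i) = p :=
  Subtype.ext <| by
    rw [AddSubgroup.val_finsetSum]
    exact (h.sum_lmul p).symm

def coordMap : AVP f g →+ (Fin n → A) :=
  BT.lift _ _ (fun a p i => a * θ i p)
    (fun a a' p => funext fun i => add_mul a a' (θ i p))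
    (fun a p p' => funext fun i => by simp only [Pi.add_apply, map_add, mul_add])
    (fun v a p => funext fun i => by
      simp only [AddMonoidHom.mulRight_apply, h.map_smulL, mul_assoc])

lemma coordMap_mk (a : A) (p : PCsub f g) :
    h.coordMap (BT.mk _ _ a p) = fun i => a * θ i p :=
  BT.lift_mk _ _ _ _ a p

lemma sumLmul_coordMap (q : AVP f g) :
    sumLmul g (fun i => (w i : Tsr g)) (h.coordMap q) = kap f g q := by
  refine DFunLike.congr_fun (BT.hom_ext (f := (sumLmul g _).comp h.coordMap) fun a p => ?_) q
  rw [AddMonoidHom.comp_apply, h.coordMap_mk, sumLmul_mul_left, sumLmul_apply, kap_mk,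
    ← h.sum_lmul]

lemma sumMk_coordMap (q : AVP f g) : sumMk f g w (h.coordMap q) = q := by
  refine DFunLike.congr_fun
    (BT.hom_ext (f := (sumMk f g w).comp h.coordMap) (g := AddMonoidHom.id _) fun a p => ?_) q
  have hbal : ∀ i, (BT.mk _ _ (a * θ i p) (w i) : AVP f g)
      = BT.mk _ _ a (smulL f g ⟨θ i p, h.mem_Vc i p⟩ (w i)) :=
    fun i => BT.mk_bal (⟨θ i p, h.mem_Vc i p⟩ : Vc f g) a (w i)
  simp only [AddMonoidHom.comp_apply, h.coordMap_mk, sumMk, AddMonoidHom.mk'_apply, hbal,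
    ← BT.mk_sum_right, h.sum_smulL, AddMonoidHom.id_apply]

lemma coordMap_laA (a : A) (q : AVP f g) (i : Fin n) :
    h.coordMap (laA f g a q) i = a * h.coordMap q i := by
  refine congrFun (DFunLike.congr_fun (BT.hom_ext (f := h.coordMap.comp (laA f g a))
    (g := ((AddMonoidHom.mulLeft a).compLeft (Fin n)).comp h.coordMap)
    fun a' p => ?_) q) i
  funext j
  simp [laA_mk, h.coordMap_mk, mul_assoc]

lemma coordMap_rcA (c : C) (q : AVP f g) (i : Fin n) :
    h.coordMap (rcA f g c q) i = h.coordMap q i * (g.comp f) c := by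
  refine congrFun (DFunLike.congr_fun (BT.hom_ext (f := h.coordMap.comp (rcA f g c))
    (g := ((AddMonoidHom.mulRight ((g.comp f) c)).compLeft (Fin n)).comp h.coordMap)
    fun a p => ?_) q) i
  funext j
  simp only [AddMonoidHom.comp_apply, rcA_mk, h.coordMap_mk, AddMonoidHom.compLeft_apply,
    Function.comp_apply, AddMonoidHom.mulRight_apply]
  rw [mul_assoc, Vc_comm f g (h.mem_Vc j p), mul_assoc]

end IsDualBasis

end DualBasis

section Splitting

variable {C B A : Type*} [Ring C] [Ring B] [Ring A] (f : C →+* B) (g : B →+* A) {n : ℕ}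

def coordHom (σ : Tsr g →+ (Fin n → A)) (i : Fin n) : PCsub f g →+ A :=
  (Pi.evalAddMonoidHom (fun _ => A) i).comp (σ.comp (PCsub f g).subtype)

variable {f g} {π : (Fin n → A) →+ Tsr g} {σ : Tsr g →+ (Fin n → A)}

lemma coordHom_mem_Vc
    (hσA : ∀ (a : A) (p : Tsr g) (i : Fin n), σ (lmul g a p) i = a * σ p i)
    (hσC : ∀ (c : C) (p : Tsr g) (i : Fin n), σ (rmul g ((g.comp f) c) p) i = σ p i * (g.comp f) c)
    (i : Fin n) (p : PCsub f g) : coordHom f g σ i p ∈ Vc f g := by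
  refine Subring.mem_centralizer_iff.mpr ?_
  rintro _ ⟨c, rfl⟩
  have hc := congrArg (σ · i) (p.2 c)
  simp only [hσA, hσC] at hc
  exact hc

theorem isDualBasis_of_splitting
    (hπA : ∀ (a : A) (v : Fin n → A), π (fun i => a * v i) = lmul g a (π v))
    (hπC : ∀ (c : C) (v : Fin n → A),
      π (fun i => v i * (g.comp f) c) = rmul g ((g.comp f) c) (π v))
    (hσA : ∀ (a : A) (p : Tsr g) (i : Fin n), σ (lmul g a p) i = a * σ p i)
    (hσC : ∀ (c : C) (p : Tsr g) (i : Fin n), σ (rmul g ((g.comp f) c) p) i = σ p i * (g.comp f) c)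
    (hπσ : ∀ p : Tsr g, π (σ p) = p) :
    IsDualBasis f g (coordHom f g σ) (fun i => ⟨π (Pi.single i 1), tCent_single hπA hπC i⟩) where
  mem_Vc := coordHom_mem_Vc hσA hσC
  map_smulL i v p := hσA v p i
  sum_lmul p := by
    conv_lhs => rw [← hπσ p, eq_sumLmul_single hπA]
    rfl

theorem kap_bijective_of_splitting
    (hπA : ∀ (a : A) (v : Fin n → A), π (fun i => a * v i) = lmul g a (π v))
    (hπC : ∀ (c : C) (v : Fin n → A),
      π (fun i => v i * (g.comp f) c) = rmul g ((g.comp f) c) (π v))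
    (hσA : ∀ (a : A) (p : Tsr g) (i : Fin n), σ (lmul g a p) i = a * σ p i)
    (hσC : ∀ (c : C) (p : Tsr g) (i : Fin n), σ (rmul g ((g.comp f) c) p) i = σ p i * (g.comp f) c)
    (hπσ : ∀ p : Tsr g, π (σ p) = p) :
    Function.Bijective (kap f g) := by
  set h := isDualBasis_of_splitting hπA hπC hσA hσC hπσ
  have hcoord : ∀ q, h.coordMap q = σ (kap f g q) := fun q =>
    DFunLike.congr_fun (BT.hom_ext (f := h.coordMap) (g := σ.comp (kap f g)) fun a p => by
      funext i
      simp only [h.coordMap_mk, AddMonoidHom.comp_apply, kap_mk, hσA]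
      rfl) q
  refine Function.bijective_iff_has_inverse.mpr ⟨fun t => sumMk f g
    (fun i => ⟨π (Pi.single i 1), tCent_single hπA hπC i⟩) (σ t), fun q => ?_, fun t => ?_⟩
  · exact (congrArg (sumMk f g _) (hcoord q)).symm.trans (h.sumMk_coordMap q)
  · rw [kap_sumMk, ← eq_sumLmul_single hπA, hπσ]

end Splitting

section FromDualBasis

variable {C B A : Type*} [Ring C] [Ring B] [Ring A] {f : C →+* B} {g : B →+* A} {n : ℕ}

theorem isRightD3_of_isDualBasis {θ : Fin n → (PCsub f g →+ A)} {w : Fin n → PCsub f g}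
    (h : IsDualBasis f g θ w) (hkap : Function.Bijective (kap f g)) :
    IsRightD3 g (g.comp f) := by
  set e := AddEquiv.ofBijective (kap f g) hkap
  have he_laA (a : A) (t : Tsr g) : e.symm (lmul g a t) = laA f g a (e.symm t) :=
    e.symm_apply_eq.2 (by
      rw [AddEquiv.ofBijective_apply, kap_laA, ← AddEquiv.ofBijective_apply _ hkap,
        e.apply_symm_apply])
  have he_rcA (c : C) (t : Tsr g) : e.symm (rmul g (g.comp f c) t) = rcA f g c (e.symm t) :=
    e.symm_apply_eq.2 (by
      rw [AddEquiv.ofBijective_apply, kap_rcA, ← AddEquiv.ofBijective_apply _ hkap,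
        e.apply_symm_apply])
  refine ⟨n, sumLmul g (fun i => (w i : Tsr g)), h.coordMap.comp e.symm.toAddMonoidHom,
    sumLmul_mul_left g _, sumLmul_mul_right g fun i => (w i).2, fun a t i => ?_,
    fun c t i => ?_, fun t => ?_⟩
  · simp only [AddMonoidHom.comp_apply, AddEquiv.coe_toAddMonoidHom, he_laA, h.coordMap_laA]
  · simp only [AddMonoidHom.comp_apply, AddEquiv.coe_toAddMonoidHom, he_rcA, h.coordMap_rcA]
  · rw [AddMonoidHom.comp_apply, h.sumLmul_coordMap]
    exact e.apply_symm_apply t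

end FromDualBasis

/-- A tower of rings `A|B|C` is right depth three if and only if
`P = (A ⊗_B A)^C` is finitely generated projective as a left module over
`V = A^C` and the map `A ⊗_V P → A ⊗_B A`, `a ⊗ p ↦ a p¹ ⊗ p²`, is an
isomorphism of `A`-`C`-bimodules. -/
theorem isRightD3_iff_preGalois {C B A : Type*} [Ring C] [Ring B] [Ring A]
    (f : C →+* B) (g : B →+* A) :
    IsRightD3 g (g.comp f) ↔
      ((∃ (n : ℕ) (θ : Fin n → (↥(PCsub f g) →+ A)) (w : Fin n → ↥(PCsub f g)),
          (∀ (i : Fin n) (p : ↥(PCsub f g)), θ i p ∈ Vc f g) ∧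
          (∀ (i : Fin n) (v : Vc f g) (p : ↥(PCsub f g)),
              θ i (smulL f g v p) = (v : A) * θ i p) ∧
          (∀ p : ↥(PCsub f g), (p : Tsr g) = ∑ i, lmul g (θ i p) (w i : Tsr g))) ∧
       Function.Bijective ⇑(kap f g) ∧
       (∀ (a : A) (q : AVP f g), kap f g (laA f g a q) = lmul g a (kap f g q)) ∧
       (∀ (c : C) (q : AVP f g),
          kap f g (rcA f g c q) = rmul g ((g.comp f) c) (kap f g q))) := by
  constructor
  · rintro ⟨n, π, σ, hπA, hπC, hσA, hσC, hπσ⟩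
    have h := isDualBasis_of_splitting hπA hπC hσA hσC hπσ
    exact ⟨⟨n, _, _, h.mem_Vc, h.map_smulL, h.sum_lmul⟩,
      kap_bijective_of_splitting hπA hπC hσA hσC hπσ, kap_laA f g, kap_rcA f g⟩
  · rintro ⟨⟨n, θ, w, hV, hsmul, hsum⟩, hkap, -, -⟩
    exact isRightD3_of_isDualBasis ⟨hV, hsmul, hsum⟩ hkap
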